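/- Let Γ be a finite simple graph each of whose edges is colored red, green, or blue, with G green edges and B blue edges. For each ordered pair (u,v) of vertices such that uv is a red edge, let d⁺(u,v) be the number of vertices w such that uw is a blue edge and vw is a green edge. Then the sum of d⁺(u,v)^2 over all ordered pairs (u,v) inducing a red edge is at most G·B. -/

import Mathlib

open scoped Classical

noncomputable section

namespace RainbowTri

variable {V : Type*} [Fintype V]

/-- The finset of edges of `Γ` having color `c` (red = 0, green = 1, blue = 2). -/
def colorEdges (Γ : SimpleGraph V) (col : Sym2 V → Fin 3) (c : Fin 3) : Finset (Sym2 V) :=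
  Finset.univ.filter (fun e => e ∈ Γ.edgeSet ∧ col e = c)

/-- The finset of rainbow triangles: 3-sets of pairwise adjacent vertices whose three
edges receive three distinct colors. -/
def rainbowTriangles (Γ : SimpleGraph V) (col : Sym2 V → Fin 3) : Finset (Finset V) :=
  Finset.univ.filter (fun s => ∃ a b c : V, s = {a, b, c} ∧
    Γ.Adj a b ∧ Γ.Adj a c ∧ Γ.Adj b c ∧
    col s(a, b) ≠ col s(a, c) ∧ col s(a, b) ≠ col s(b, c) ∧ col s(a, c) ≠ col s(b, c))

/-- The finset of properly 3-edge-colored copies of `K₄`: 4-sets of pairwise adjacent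
vertices on which each color appears on exactly two (disjoint) of the six edges. -/
def properK4s (Γ : SimpleGraph V) (col : Sym2 V → Fin 3) : Finset (Finset V) :=
  Finset.univ.filter (fun s => ∃ a b c d : V, s = {a, b, c, d} ∧
    Γ.Adj a b ∧ Γ.Adj a c ∧ Γ.Adj a d ∧ Γ.Adj b c ∧ Γ.Adj b d ∧ Γ.Adj c d ∧
    col s(a, b) = col s(c, d) ∧ col s(a, c) = col s(b, d) ∧ col s(a, d) = col s(b, c) ∧
    col s(a, b) ≠ col s(a, c) ∧ col s(a, b) ≠ col s(a, d) ∧ col s(a, c) ≠ col s(a, d))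

/-- The color pattern of a proper 3-edge-coloring of `K₄` on vertex set `Fin 4`:
opposite edges get the same color ({0,1},{2,3} ↦ 0; {0,2},{1,3} ↦ 1; {0,3},{1,2} ↦ 2). -/
def pairColor (i j : Fin 4) : Fin 3 :=
  ⟨((i.val ^^^ j.val) - 1) % 3, Nat.mod_lt _ (by norm_num)⟩

/-- `Γ` (with edge coloring `col`) is obtained from a blowup of a properly
3-edge-colored `K₄` by possibly adding a set of isolated vertices: vertices mapped to
`none` are isolated, vertices are adjacent iff they lie in distinct parts, and colors
between parts follow the proper `K₄`-pattern up to a permutation `σ` of the colors. -/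
def IsBlowupK4PlusIsolated (Γ : SimpleGraph V) (col : Sym2 V → Fin 3) : Prop :=
  ∃ (P : V → Option (Fin 4)) (σ : Equiv.Perm (Fin 3)),
    (∀ u v : V, Γ.Adj u v ↔ ∃ i j : Fin 4, i ≠ j ∧ P u = some i ∧ P v = some j) ∧
    (∀ (u v : V) (i j : Fin 4), P u = some i → P v = some j → Γ.Adj u v →
      col s(u, v) = σ (pairColor i j))

/-- As `IsBlowupK4PlusIsolated`, where moreover the four parts have equal size. -/
def IsBalancedBlowupK4PlusIsolated (Γ : SimpleGraph V) (col : Sym2 V → Fin 3) : Prop :=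
  ∃ (P : V → Option (Fin 4)) (σ : Equiv.Perm (Fin 3)),
    (∀ u v : V, Γ.Adj u v ↔ ∃ i j : Fin 4, i ≠ j ∧ P u = some i ∧ P v = some j) ∧
    (∀ (u v : V) (i j : Fin 4), P u = some i → P v = some j → Γ.Adj u v →
      col s(u, v) = σ (pairColor i j)) ∧
    (∀ i j : Fin 4, (Finset.univ.filter (fun v => P v = some i)).card
      = (Finset.univ.filter (fun v => P v = some j)).card)

/-- `Γ` (with edge coloring `col`) is a balanced blowup of a properly 3-edge-colored
`K₄` (no extra isolated vertices). -/
def IsBalancedBlowupK4 (Γ : SimpleGraph V) (col : Sym2 V → Fin 3) : Prop :=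
  ∃ (P : V → Fin 4) (σ : Equiv.Perm (Fin 3)),
    (∀ u v : V, Γ.Adj u v ↔ P u ≠ P v) ∧
    (∀ u v : V, Γ.Adj u v → col s(u, v) = σ (pairColor (P u) (P v))) ∧
    (∀ i j : Fin 4, (Finset.univ.filter (fun v => P v = i)).card
      = (Finset.univ.filter (fun v => P v = j)).card)

/-- `d⁺(u,v)`: the number of vertices `w` with `uw` blue and `vw` green. -/
def dPlus (Γ : SimpleGraph V) (col : Sym2 V → Fin 3) (u v : V) : ℕ :=
  (Finset.univ.filter (fun w => Γ.Adj u w ∧ col s(u, w) = 2 ∧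
    Γ.Adj v w ∧ col s(v, w) = 1)).card

/-- `d⁻(u,v)`: the number of vertices `w` with `uw` green and `vw` blue. -/
def dMinus (Γ : SimpleGraph V) (col : Sym2 V → Fin 3) (u v : V) : ℕ :=
  (Finset.univ.filter (fun w => Γ.Adj u w ∧ col s(u, w) = 1 ∧
    Γ.Adj v w ∧ col s(v, w) = 2)).card

/-- `d_K(u,v)`: the number of ordered pairs `(w,x)` with `wx` red, `uw`, `vx` green
and `ux`, `vw` blue. -/
def dK (Γ : SimpleGraph V) (col : Sym2 V → Fin 3) (u v : V) : ℕ :=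
  (Finset.univ.filter (fun p : V × V => Γ.Adj p.1 p.2 ∧ col s(p.1, p.2) = 0 ∧
    Γ.Adj u p.1 ∧ col s(u, p.1) = 1 ∧ Γ.Adj v p.2 ∧ col s(v, p.2) = 1 ∧
    Γ.Adj u p.2 ∧ col s(u, p.2) = 2 ∧ Γ.Adj v p.1 ∧ col s(v, p.1) = 2)).card

/-- Ordered pairs of vertices inducing a red edge. -/
def redPairs (Γ : SimpleGraph V) (col : Sym2 V → Fin 3) : Finset (V × V) :=
  Finset.univ.filter (fun p => Γ.Adj p.1 p.2 ∧ col s(p.1, p.2) = 0)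

/-- The set `S` of ordered tuples `(u,v,x,y)` with `uv` red, `ux`, `uy` blue and
`vx`, `vy` green (`x = y` allowed). -/
def tupleSet (Γ : SimpleGraph V) (col : Sym2 V → Fin 3) : Finset (V × V × V × V) :=
  Finset.univ.filter (fun t => Γ.Adj t.1 t.2.1 ∧ col s(t.1, t.2.1) = 0 ∧
    Γ.Adj t.1 t.2.2.1 ∧ col s(t.1, t.2.2.1) = 2 ∧
    Γ.Adj t.1 t.2.2.2 ∧ col s(t.1, t.2.2.2) = 2 ∧
    Γ.Adj t.2.1 t.2.2.1 ∧ col s(t.2.1, t.2.2.1) = 1 ∧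
    Γ.Adj t.2.1 t.2.2.2 ∧ col s(t.2.1, t.2.2.2) = 1)


section

variable (Γ : SimpleGraph V) (col : Sym2 V → Fin 3)

def blueGreenNbrs (u v : V) : Finset V :=
  Finset.univ.filter (fun w => Γ.Adj u w ∧ col s(u, w) = 2 ∧ Γ.Adj v w ∧ col s(v, w) = 1)

theorem card_blueGreenNbrs (u v : V) : (blueGreenNbrs Γ col u v).card = dPlus Γ col u v := rfl

@[simp]
theorem mem_blueGreenNbrs {u v w : V} :
    w ∈ blueGreenNbrs Γ col u v ↔ Γ.Adj u w ∧ col s(u, w) = 2 ∧ Γ.Adj v w ∧ col s(v, w) = 1 := by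
  simp [blueGreenNbrs]

@[simp]
theorem mem_redPairs {u v : V} : (u, v) ∈ redPairs Γ col ↔ Γ.Adj u v ∧ col s(u, v) = 0 := by
  simp [redPairs]

theorem mem_tupleSet {u v x y : V} :
    (u, v, x, y) ∈ tupleSet Γ col ↔ (u, v) ∈ redPairs Γ col ∧
      x ∈ blueGreenNbrs Γ col u v ∧ y ∈ blueGreenNbrs Γ col u v := by
  simp only [tupleSet, Finset.mem_filter, Finset.mem_univ, true_and, mem_redPairs,
    mem_blueGreenNbrs]
  tauto

theorem card_tupleSet :
    (tupleSet Γ col).card = ∑ p ∈ redPairs Γ col, dPlus Γ col p.1 p.2 ^ 2 := by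
  simp only [← card_blueGreenNbrs, sq, ← Finset.card_product, ← Finset.card_sigma]
  refine Finset.card_nbij' (fun t => ⟨(t.1, t.2.1), (t.2.2.1, t.2.2.2)⟩)
    (fun s => (s.1.1, s.1.2, s.2.1, s.2.2)) ?_ ?_ (fun _ _ => rfl) (fun _ _ => rfl)
  · rintro ⟨u, v, x, y⟩ ht
    simpa [mem_tupleSet] using ht
  · rintro ⟨⟨u, v⟩, x, y⟩ hs
    simpa [mem_tupleSet] using hs

/-- A tuple `(u, v, x, y)` is recovered from the green edge `vx` and the blue edge `uy`:
each alternative orientation would force an edge to carry two colors. -/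
theorem card_tupleSet_le :
    (tupleSet Γ col).card ≤ (colorEdges Γ col 1).card * (colorEdges Γ col 2).card := by
  rw [← Finset.card_product]
  refine Finset.card_le_card_of_injOn (fun t => (s(t.2.1, t.2.2.1), s(t.1, t.2.2.2))) ?_ ?_
  · rintro ⟨u, v, x, y⟩ ht
    simp only [Finset.mem_coe, mem_tupleSet, mem_blueGreenNbrs] at ht
    simp [colorEdges, ht]
  · rintro ⟨u, v, x, y⟩ ht ⟨u', v', x', y'⟩ ht' heq
    simp only [Finset.mem_coe, mem_tupleSet, mem_redPairs, mem_blueGreenNbrs] at ht ht'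
    simp only [Prod.mk.injEq, Sym2.eq_iff] at heq
    obtain ⟨⟨rfl, rfl⟩ | ⟨rfl, rfl⟩, ⟨rfl, rfl⟩ | ⟨rfl, rfl⟩⟩ := heq
    · rfl
    all_goals grind [Sym2.eq_swap]

end

/-- The sum of `d⁺(u,v)²` over all ordered pairs `(u,v)` inducing a red edge is at
most `G·B`. -/
theorem stmt10 (Γ : SimpleGraph V) (col : Sym2 V → Fin 3) (G B : ℕ)
    (hG : G = (colorEdges Γ col 1).card)
    (hB : B = (colorEdges Γ col 2).card) :
    ∑ p ∈ redPairs Γ col, (dPlus Γ col p.1 p.2) ^ 2 ≤ G * B := by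
  rw [hG, hB, ← card_tupleSet]
  exact card_tupleSet_le Γ col

end RainbowTri
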